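/- arXiv:0805.3888 — 2 statements merged into one kernel-verified Lean document; each statement's English description precedes it below -/
import Mathlib

section
/- Define g₂(a, z) = G(a + z) − G(a) − DG(a)[z] for a, z ∈ ℂ. Then there exists a constant C > 0 (depending only on C₀, α₁, α₂) such that for all a, z₁, z₂ ∈ ℂ: |g₂(a, z₁) − g₂(a, z₂)| ≤ C·[(|a|^{α₁} + |a|^{α₂})(|z₁| + |z₂|) + |z₁|^{1+α₁} + |z₂|^{1+α₁} + |z₁|^{1+α₂} + |z₂|^{1+α₂}]·|z₁ − z₂|. -/
/-!
Write `G z = φ ‖z‖ • z` with `φ r = g r / r`. Then `DG(z) w = φ ‖z‖ • w + (q ‖z‖ * ⟪z, w⟫) • z`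
with `q = φ' / r`, and integrating `|g''(s)| ≤ ω |s|` (for a weight `ω` monotone on `[0, ∞)`,
here `ω r = C₀ (r ^ α₁ + r ^ α₂)`) twice from `0` gives `|g' r| ≤ ω r * r` and `|g r| ≤ ω r * r²`,
hence `|φ| ≤ ω r * r`, `|q| ≤ 2 ω r / r` and `|q'| ≤ 7 ω r / r²`. These yield
`‖DG x - DG y‖ ≤ 36 ω (max ‖x‖ ‖y‖) ‖x - y‖`: if `‖x‖ ≤ 2 ‖x - y‖` (with `‖y‖ ≤ ‖x‖`) simply from
`‖DG z‖ ≤ 3 ω ‖z‖ ‖z‖`, otherwise `‖y‖ > ‖x‖ / 2` and the mean value theorem for `φ` and `q`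
on `[‖y‖, ‖x‖]` applies. The mean value inequality for `G - DG(a)` on the segment from `a + z₂`
to `a + z₁` bounds `g₂ a z₁ - g₂ a z₂` by `36 ω (‖a‖ + ‖z₁‖ + ‖z₂‖) (‖z₁‖ + ‖z₂‖) ‖z₁ - z₂‖`,
and `(A + B + C) ^ α (B + C) ≤ 2 · 3 ^ α (A ^ α (B + C) + B ^ (1 + α) + C ^ (1 + α))` finishes.
-/

open Real Set
open scoped RealInnerProductSpace

lemma abs_le_mul_of_abs_deriv_le {f : ℝ → ℝ} (hf : Differentiable ℝ f) (hf0 : f 0 = 0)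
    {r M : ℝ} (hr : 0 ≤ r) (hM : ∀ t ∈ Icc 0 r, |deriv f t| ≤ M) : |f r| ≤ M * r := by
  simpa [hf0, abs_of_nonneg hr] using
    (convex_Icc 0 r).norm_image_sub_le_of_norm_deriv_le (fun t _ => hf t) hM
      (left_mem_Icc.2 hr) (right_mem_Icc.2 hr)

lemma hasDerivAt_div_self {g : ℝ → ℝ} {r : ℝ} (hg : DifferentiableAt ℝ g r) (hr : r ≠ 0) :
    HasDerivAt (fun t => g t / t) (deriv g r / r - g r / r ^ 2) r := by
  refine (hg.hasDerivAt.div (hasDerivAt_id r) hr).congr_deriv ?_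
  simp only [id]
  field_simp

/-- `φ' r / r` for `φ r = g r / r`. -/
noncomputable def radialCoeff (g : ℝ → ℝ) (r : ℝ) : ℝ := (deriv g r / r - g r / r ^ 2) / r

lemma hasDerivAt_radialCoeff {g : ℝ → ℝ} (hg : ContDiff ℝ 2 g) {r : ℝ} (hr : r ≠ 0) :
    HasDerivAt (radialCoeff g)
      ((deriv (deriv g) r - 3 * (deriv g r / r) + 3 * (g r / r ^ 2)) / r ^ 2) r := by
  have hg' : ContDiff ℝ 1 (deriv g) := ((contDiff_succ_iff_deriv (n := 1)).mp hg).2.2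
  have h₁ := (hg'.differentiable one_ne_zero r).hasDerivAt.fun_div (hasDerivAt_id r) hr
  have h₂ := (hg.differentiable two_ne_zero r).hasDerivAt.fun_div (hasDerivAt_pow 2 r)
    (pow_ne_zero 2 hr)
  refine ((h₁.fun_sub h₂).fun_div (hasDerivAt_id r) hr).congr_deriv ?_
  simp only [id]
  field_simp
  ring

variable {E : Type*} [NormedAddCommGroup E] [InnerProductSpace ℝ E]

lemma hasFDerivAt_norm_of_ne_zero {x : E} (hx : x ≠ 0) :
    HasFDerivAt (‖·‖) (‖x‖⁻¹ • innerSL ℝ x) x := by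
  have h := (Real.hasDerivAt_sqrt (pow_ne_zero 2 (norm_ne_zero_iff.2 hx))).comp_hasFDerivAt x
    (hasStrictFDerivAt_norm_sq x).hasFDerivAt
  simp only [Function.comp_def, Real.sqrt_sq_eq_abs, abs_norm] at h
  refine h.congr_fderiv ?_
  ext y
  simp only [one_div, mul_inv_rev, smul_apply, coe_innerSL_apply, nsmul_eq_mul, Nat.cast_ofNat,
    smul_eq_mul]
  field_simp

noncomputable def radialMap (g : ℝ → ℝ) (x : E) : E := (g ‖x‖ / ‖x‖) • x

/-- At `x = 0` both summands vanish (`g 0 / 0 = 0`), which is the correct derivative there. -/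
noncomputable def radialFDeriv (g : ℝ → ℝ) (x : E) : E →L[ℝ] E :=
  (g ‖x‖ / ‖x‖) • ContinuousLinearMap.id ℝ E + (radialCoeff g ‖x‖ • innerSL ℝ x).smulRight x

lemma radialFDeriv_apply (g : ℝ → ℝ) (x w : E) :
    radialFDeriv g x w = (g ‖x‖ / ‖x‖) • w + (radialCoeff g ‖x‖ * ⟪x, w⟫) • x := by
  simp [radialFDeriv]

lemma hasFDerivAt_radialMap_of_ne_zero {g : ℝ → ℝ} (hg : Differentiable ℝ g) {x : E}
    (hx : x ≠ 0) : HasFDerivAt (radialMap g) (radialFDeriv g x) x := by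
  have hc := (hasDerivAt_div_self (hg ‖x‖) (norm_ne_zero_iff.2 hx)).comp_hasFDerivAt x
    (hasFDerivAt_norm_of_ne_zero hx)
  refine (hc.smul (hasFDerivAt_id x)).congr_fderiv ?_
  simp only [radialFDeriv, radialCoeff, smul_smul, div_eq_mul_inv _ ‖x‖]
  rfl

lemma norm_smul_add_inner_smul_sub_le (a b c e : ℝ) (x y w : E) :
    ‖(a • w + (c * ⟪x, w⟫) • x) - (b • w + (e * ⟪y, w⟫) • y)‖
      ≤ (|a - b| + |c - e| * ‖x‖ ^ 2 + |e| * (‖x‖ + ‖y‖) * ‖x - y‖) * ‖w‖ := by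
  have hsplit : (a • w + (c * ⟪x, w⟫) • x) - (b • w + (e * ⟪y, w⟫) • y)
      = (a - b) • w + ((c - e) * ⟪x, w⟫) • x + (e * ⟪x - y, w⟫) • x
        + (e * ⟪y, w⟫) • (x - y) := by
    rw [inner_sub_left]
    module
  have hx := abs_real_inner_le_norm x w
  have hxy := abs_real_inner_le_norm (x - y) w
  have hy := abs_real_inner_le_norm y w
  rw [hsplit]
  refine norm_add₄_le.trans ?_
  simp only [norm_smul, Real.norm_eq_abs, abs_mul]
  have := abs_nonneg e
  have := abs_nonneg (c - e)
  have := norm_nonneg (x - y)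
  have := norm_nonneg x
  have := norm_nonneg w
  nlinarith [mul_le_mul_of_nonneg_left hx (by positivity : 0 ≤ |c - e| * ‖x‖),
    mul_le_mul_of_nonneg_left hxy (by positivity : 0 ≤ |e| * ‖x‖),
    mul_le_mul_of_nonneg_left hy (by positivity : 0 ≤ |e| * ‖x - y‖)]

lemma norm_sub_sub_le_of_hasFDerivAt {F : Type*} [NormedAddCommGroup F] [NormedSpace ℝ F]
    {f : E → F} {f' : E → E →L[ℝ] F} (hf : ∀ x, HasFDerivAt f (f' x) x) {a z₁ z₂ : E} {M : ℝ}
    (hM : ∀ x ∈ segment ℝ (a + z₂) (a + z₁), ‖f' x - f' a‖ ≤ M) :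
    ‖(f (a + z₁) - f a - f' a z₁) - (f (a + z₂) - f a - f' a z₂)‖ ≤ M * ‖z₁ - z₂‖ := by
  have h := (convex_segment (a + z₂) (a + z₁)).norm_image_sub_le_of_norm_hasFDerivWithin_le'
    (fun x _ => (hf x).hasFDerivWithinAt) hM (left_mem_segment ℝ _ _) (right_mem_segment ℝ _ _)
  rw [add_sub_add_left_eq_sub] at h
  convert h using 2
  rw [map_sub]
  abel

section RadialBounds

variable {g ω : ℝ → ℝ} (hg : ContDiff ℝ 2 g) (hω : MonotoneOn ω (Ici 0))
  (hg'' : ∀ s, |deriv (deriv g) s| ≤ ω |s|)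

include hg'' in
lemma nonneg_of_abs_deriv_deriv_le {r : ℝ} (hr : 0 ≤ r) : 0 ≤ ω r := by
  simpa [abs_of_nonneg hr] using (abs_nonneg _).trans (hg'' r)

include hg hω hg'' in
lemma abs_deriv_le_of_abs_deriv_deriv_le (hg'0 : deriv g 0 = 0) {r : ℝ} (hr : 0 ≤ r) :
    |deriv g r| ≤ ω r * r := by
  have hg' : ContDiff ℝ 1 (deriv g) := ((contDiff_succ_iff_deriv (n := 1)).mp hg).2.2
  refine abs_le_mul_of_abs_deriv_le (hg'.differentiable one_ne_zero) hg'0 hr fun t ht => ?_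
  calc |deriv (deriv g) t| ≤ ω |t| := hg'' t
    _ ≤ ω r := hω (abs_nonneg t) hr (by rw [abs_of_nonneg ht.1]; exact ht.2)

include hg hω hg'' in
lemma abs_deriv_div_le_of_abs_deriv_deriv_le (hg'0 : deriv g 0 = 0) {r : ℝ} (hr : 0 < r) :
    |deriv g r / r| ≤ ω r := by
  rw [abs_div, abs_of_pos hr, div_le_iff₀ hr]
  exact abs_deriv_le_of_abs_deriv_deriv_le hg hω hg'' hg'0 hr.le

variable (hg0 : g 0 = 0) (hg'0 : deriv g 0 = 0)
include hg hω hg'' hg0 hg'0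

lemma abs_le_of_abs_deriv_deriv_le {r : ℝ} (hr : 0 ≤ r) : |g r| ≤ ω r * r ^ 2 := by
  rw [sq, ← mul_assoc]
  refine abs_le_mul_of_abs_deriv_le (hg.differentiable two_ne_zero) hg0 hr fun t ht => ?_
  calc |deriv g t| ≤ ω t * t := abs_deriv_le_of_abs_deriv_deriv_le hg hω hg'' hg'0 ht.1
    _ ≤ ω r * r := mul_le_mul (hω ht.1 hr ht.2) ht.2 ht.1
        (nonneg_of_abs_deriv_deriv_le hg'' hr)

lemma abs_div_sq_le_of_abs_deriv_deriv_le {r : ℝ} (hr : 0 < r) : |g r / r ^ 2| ≤ ω r := by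
  rw [abs_div, abs_of_pos (pow_pos hr 2), div_le_iff₀ (pow_pos hr 2)]
  exact abs_le_of_abs_deriv_deriv_le hg hω hg'' hg0 hg'0 hr.le

lemma abs_div_self_le {r : ℝ} (hr : 0 ≤ r) : |g r / r| ≤ ω r * r := by
  rcases hr.eq_or_lt with rfl | hr
  · simp
  rw [abs_div, abs_of_pos hr, div_le_iff₀ hr, mul_assoc, ← sq]
  exact abs_le_of_abs_deriv_deriv_le hg hω hg'' hg0 hg'0 hr.le

lemma abs_radialCoeff_mul_le {r : ℝ} (hr : 0 ≤ r) : |radialCoeff g r| * r ≤ 2 * ω r := by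
  rcases hr.eq_or_lt with rfl | hr
  · simpa using nonneg_of_abs_deriv_deriv_le hg'' le_rfl
  rw [radialCoeff, abs_div, abs_of_pos hr, div_mul_cancel₀ _ hr.ne', two_mul]
  exact (abs_sub _ _).trans (add_le_add (abs_deriv_div_le_of_abs_deriv_deriv_le hg hω hg'' hg'0 hr)
    (abs_div_sq_le_of_abs_deriv_deriv_le hg hω hg'' hg0 hg'0 hr))

lemma abs_div_self_sub_le {r s : ℝ} (hs : 0 < s) (hsr : s ≤ r) :
    |g r / r - g s / s| ≤ 2 * ω r * (r - s) := by
  have hIcc : ∀ t ∈ Icc s r, 0 < t := fun t ht => hs.trans_le ht.1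
  have := (convex_Icc s r).norm_image_sub_le_of_norm_hasDerivWithin_le
    (fun t ht => (hasDerivAt_div_self (hg.differentiable two_ne_zero t)
      (hIcc t ht).ne').hasDerivWithinAt)
    (fun t ht => by
      rw [Real.norm_eq_abs]
      calc |deriv g t / t - g t / t ^ 2| ≤ ω t + ω t := (abs_sub _ _).trans
            (add_le_add (abs_deriv_div_le_of_abs_deriv_deriv_le hg hω hg'' hg'0 (hIcc t ht))
              (abs_div_sq_le_of_abs_deriv_deriv_le hg hω hg'' hg0 hg'0 (hIcc t ht)))
        _ ≤ 2 * ω r := by linarith [hω (hIcc t ht).le (hs.le.trans hsr) ht.2])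
    (left_mem_Icc.2 hsr) (right_mem_Icc.2 hsr)
  rwa [Real.norm_eq_abs, Real.norm_eq_abs, abs_of_nonneg (sub_nonneg.2 hsr)] at this

lemma abs_radialCoeff_sub_le {r s : ℝ} (hs : 0 < s) (hsr : s ≤ r) (hrs : r ≤ 2 * s) :
    |radialCoeff g r - radialCoeff g s| ≤ 28 * ω r / r ^ 2 * (r - s) := by
  have hIcc : ∀ t ∈ Icc s r, 0 < t := fun t ht => hs.trans_le ht.1
  have := (convex_Icc s r).norm_image_sub_le_of_norm_hasDerivWithin_le
    (C := 28 * ω r / r ^ 2)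
    (fun t ht => (hasDerivAt_radialCoeff hg (hIcc t ht).ne').hasDerivWithinAt)
    (fun t ht => by
      have ht0 := hIcc t ht
      have hωt := hω ht0.le (hs.le.trans hsr) ht.2
      have hu := abs_div_sq_le_of_abs_deriv_deriv_le hg hω hg'' hg0 hg'0 ht0
      have hv := abs_deriv_div_le_of_abs_deriv_deriv_le hg hω hg'' hg'0 ht0
      have hw : |deriv (deriv g) t| ≤ ω t := by simpa [abs_of_pos ht0] using hg'' t
      have hnum : |deriv (deriv g) t - 3 * (deriv g t / t) + 3 * (g t / t ^ 2)| ≤ 7 * ω r := by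
        rw [abs_le] at hu hv hw ⊢
        constructor <;> linarith
      rw [Real.norm_eq_abs, abs_div, abs_of_pos (pow_pos ht0 2),
        div_le_div_iff₀ (pow_pos ht0 2) (pow_pos (hs.trans_le hsr) 2)]
      have hr2 : r ^ 2 ≤ 4 * t ^ 2 := by nlinarith [ht.1]
      nlinarith [nonneg_of_abs_deriv_deriv_le hg'' (hs.le.trans hsr)])
    (left_mem_Icc.2 hsr) (right_mem_Icc.2 hsr)
  rwa [Real.norm_eq_abs, Real.norm_eq_abs, abs_of_nonneg (sub_nonneg.2 hsr)] at this

lemma hasFDerivAt_radialMap (x : E) : HasFDerivAt (radialMap g) (radialFDeriv g x) x := by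
  rcases eq_or_ne x 0 with rfl | hx
  · have hzero : radialFDeriv g (0 : E) = 0 := by simp [radialFDeriv]
    rw [hzero]
    refine Asymptotics.IsBigO.hasFDerivAt (n := 2) ?_ one_lt_two
    refine Asymptotics.IsBigO.of_bound (ω 1) ?_
    filter_upwards [Metric.ball_mem_nhds (0 : E) one_pos] with y hy
    rw [mem_ball_zero_iff] at hy
    have hφ := abs_div_self_le hg hω hg'' hg0 hg'0 (norm_nonneg y)
    have hωy := hω (norm_nonneg y) (mem_Ici.2 zero_le_one) hy.le
    simp only [radialMap, norm_smul, Real.norm_eq_abs, sub_zero, norm_pow, abs_norm]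
    have := norm_nonneg y
    nlinarith [mul_le_mul_of_nonneg_right hφ this]
  · exact hasFDerivAt_radialMap_of_ne_zero (hg.differentiable two_ne_zero) hx

lemma norm_radialFDeriv_le (x : E) : ‖radialFDeriv g x‖ ≤ 3 * ω ‖x‖ * ‖x‖ := by
  have hω0 := nonneg_of_abs_deriv_deriv_le hg'' (norm_nonneg x)
  refine ContinuousLinearMap.opNorm_le_bound _ (by positivity) fun w => ?_
  have hφ := abs_div_self_le hg hω hg'' hg0 hg'0 (norm_nonneg x)
  have hq := abs_radialCoeff_mul_le hg hω hg'' hg0 hg'0 (norm_nonneg x)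
  have hxw := abs_real_inner_le_norm x w
  rw [radialFDeriv_apply]
  refine (norm_add_le _ _).trans ?_
  simp only [norm_smul, Real.norm_eq_abs, abs_mul]
  have := norm_nonneg x
  have := norm_nonneg w
  nlinarith [mul_le_mul_of_nonneg_left hxw (by positivity : 0 ≤ |radialCoeff g ‖x‖| * ‖x‖),
    mul_le_mul_of_nonneg_right hq (by positivity : 0 ≤ ‖x‖ * ‖w‖),
    mul_le_mul_of_nonneg_right hφ this]

lemma norm_radialFDeriv_sub_le_of_le_two_mul {x y : E} (hy : 0 < ‖y‖) (hyx : ‖y‖ ≤ ‖x‖)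
    (hxy : ‖x‖ ≤ 2 * ‖y‖) :
    ‖radialFDeriv g x - radialFDeriv g y‖ ≤ 36 * ω ‖x‖ * ‖x - y‖ := by
  have hx : 0 < ‖x‖ := hy.trans_le hyx
  have hd : ‖x‖ - ‖y‖ ≤ ‖x - y‖ := norm_sub_norm_le x y
  have hω0 := nonneg_of_abs_deriv_deriv_le hg'' hx.le
  have hφ := abs_div_self_sub_le hg hω hg'' hg0 hg'0 hy hyx
  have hq := abs_radialCoeff_sub_le hg hω hg'' hg0 hg'0 hy hyx hxy
  rw [div_mul_eq_mul_div, le_div_iff₀ (pow_pos hx 2)] at hq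
  have hqy : |radialCoeff g ‖y‖| * (‖x‖ + ‖y‖) ≤ 6 * ω ‖x‖ := by
    have h := abs_radialCoeff_mul_le hg hω hg'' hg0 hg'0 hy.le
    have hωy := hω hy.le hx.le hyx
    nlinarith [mul_le_mul_of_nonneg_left hxy (abs_nonneg (radialCoeff g ‖y‖))]
  refine ContinuousLinearMap.opNorm_le_bound _ (by positivity) fun w => ?_
  rw [sub_apply, radialFDeriv_apply, radialFDeriv_apply]
  refine (norm_smul_add_inner_smul_sub_le _ _ _ _ x y w).trans ?_
  gcongr
  nlinarith [mul_le_mul_of_nonneg_right hqy (norm_nonneg (x - y))]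

lemma norm_radialFDeriv_sub_le_of_le_norm_sub {x y : E} (hyx : ‖y‖ ≤ ‖x‖)
    (hxy : ‖x‖ ≤ 2 * ‖x - y‖) :
    ‖radialFDeriv g x - radialFDeriv g y‖ ≤ 12 * ω ‖x‖ * ‖x - y‖ := by
  have hωx := nonneg_of_abs_deriv_deriv_le hg'' (norm_nonneg x)
  have hωy := hω (norm_nonneg y) (norm_nonneg x) hyx
  have hy := norm_radialFDeriv_le hg hω hg'' hg0 hg'0 y
  have hx := norm_radialFDeriv_le hg hω hg'' hg0 hg'0 x
  refine (norm_sub_le _ _).trans ?_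
  nlinarith [mul_le_mul hωy hyx (norm_nonneg y) hωx]

lemma norm_radialFDeriv_sub_le (x y : E) :
    ‖radialFDeriv g x - radialFDeriv g y‖ ≤ 36 * ω (max ‖x‖ ‖y‖) * ‖x - y‖ := by
  wlog hyx : ‖y‖ ≤ ‖x‖ generalizing x y
  · rw [norm_sub_rev, norm_sub_rev x, max_comm]
    exact this y x (le_of_not_ge hyx)
  rw [max_eq_left hyx]
  have hω0 := nonneg_of_abs_deriv_deriv_le hg'' (norm_nonneg x)
  rcases le_or_gt ‖x‖ (2 * ‖x - y‖) with hxy | hxy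
  · refine (norm_radialFDeriv_sub_le_of_le_norm_sub hg hω hg'' hg0 hg'0 hyx hxy).trans ?_
    gcongr
    norm_num
  · have hd := norm_sub_norm_le x y
    exact norm_radialFDeriv_sub_le_of_le_two_mul hg hω hg'' hg0 hg'0 (by linarith) hyx
      (by linarith)

lemma norm_radialMap_remainder_sub_le (a z₁ z₂ : E) :
    ‖(radialMap g (a + z₁) - radialMap g a - radialFDeriv g a z₁)
        - (radialMap g (a + z₂) - radialMap g a - radialFDeriv g a z₂)‖
      ≤ 36 * ω (‖a‖ + ‖z₁‖ + ‖z₂‖) * (‖z₁‖ + ‖z₂‖) * ‖z₁ - z₂‖ := by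
  refine norm_sub_sub_le_of_hasFDerivAt (hasFDerivAt_radialMap hg hω hg'' hg0 hg'0) fun x hx => ?_
  have hxa : ‖x - a‖ ≤ ‖z₁‖ + ‖z₂‖ := by
    have hball : segment ℝ (a + z₂) (a + z₁) ⊆ Metric.closedBall a (‖z₁‖ + ‖z₂‖) :=
      (convex_closedBall _ _).segment_subset (by simp) (by simp)
    simpa [dist_eq_norm] using hball hx
  have hmax : max ‖x‖ ‖a‖ ≤ ‖a‖ + ‖z₁‖ + ‖z₂‖ := by
    have := norm_le_norm_add_norm_sub' x a
    exact max_le (by linarith) (by linarith [norm_nonneg z₁, norm_nonneg z₂])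
  have hω0 := nonneg_of_abs_deriv_deriv_le hg'' (by positivity : 0 ≤ ‖a‖ + ‖z₁‖ + ‖z₂‖)
  refine (norm_radialFDeriv_sub_le hg hω hg'' hg0 hg'0 x a).trans ?_
  gcongr
  exact hω (le_max_of_le_left (norm_nonneg x)) (mem_Ici.2 (by positivity)) hmax

end RadialBounds

lemma add_add_rpow_le {α A B C : ℝ} (hα : 0 ≤ α) (hA : 0 ≤ A) (hB : 0 ≤ B) (hC : 0 ≤ C) :
    (A + B + C) ^ α ≤ 3 ^ α * (A ^ α + B ^ α + C ^ α) := by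
  have hm : max A (max B C) ^ α ≤ A ^ α + B ^ α + C ^ α := by
    have := rpow_nonneg hA α
    have := rpow_nonneg hB α
    have := rpow_nonneg hC α
    rcases max_choice A (max B C) with h | h <;> rw [h]
    · linarith
    rcases max_choice B C with h' | h' <;> rw [h'] <;> linarith
  calc (A + B + C) ^ α ≤ (3 * max A (max B C)) ^ α := by
        gcongr
        linarith [le_max_left A (max B C), le_max_left B C, le_max_right B C,
          le_max_right A (max B C)]
    _ = 3 ^ α * max A (max B C) ^ α := mul_rpow (by norm_num) (hA.trans (le_max_left _ _))
    _ ≤ 3 ^ α * (A ^ α + B ^ α + C ^ α) := by gcongr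

lemma rpow_add_rpow_mul_add_le {α B C : ℝ} (hα : 0 ≤ α) (hB : 0 ≤ B) (hC : 0 ≤ C) :
    (B ^ α + C ^ α) * (B + C) ≤ 2 * (B ^ (1 + α) + C ^ (1 + α)) := by
  have hchebyshev : 0 ≤ (B ^ α - C ^ α) * (B - C) := by
    rcases le_total B C with h | h
    · exact mul_nonneg_of_nonpos_of_nonpos (sub_nonpos.2 (rpow_le_rpow hB h hα)) (sub_nonpos.2 h)
    · exact mul_nonneg (sub_nonneg.2 (rpow_le_rpow hC h hα)) (sub_nonneg.2 h)
  rw [rpow_one_add' hB (by positivity), rpow_one_add' hC (by positivity)]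
  nlinarith

lemma add_add_rpow_mul_le {α A B C : ℝ} (hα : 0 ≤ α) (hA : 0 ≤ A) (hB : 0 ≤ B) (hC : 0 ≤ C) :
    (A + B + C) ^ α * (B + C) ≤ 2 * 3 ^ α * (A ^ α * (B + C) + B ^ (1 + α) + C ^ (1 + α)) := by
  have h3 : 0 ≤ (3 : ℝ) ^ α := by positivity
  have := rpow_nonneg hA α
  have := rpow_nonneg hB (1 + α)
  have := rpow_nonneg hC (1 + α)
  calc (A + B + C) ^ α * (B + C) ≤ 3 ^ α * (A ^ α + B ^ α + C ^ α) * (B + C) := by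
        gcongr
        exact add_add_rpow_le hα hA hB hC
    _ = 3 ^ α * (A ^ α * (B + C) + (B ^ α + C ^ α) * (B + C)) := by ring
    _ ≤ 3 ^ α * (A ^ α * (B + C) + 2 * (B ^ (1 + α) + C ^ (1 + α))) := by
        have := rpow_add_rpow_mul_add_le hα hB hC
        gcongr
    _ ≤ 2 * 3 ^ α * (A ^ α * (B + C) + B ^ (1 + α) + C ^ (1 + α)) := by
        nlinarith [mul_nonneg h3 (mul_nonneg (rpow_nonneg hA α) (add_nonneg hB hC))]

lemma add_add_rpow_add_rpow_mul_le {α₁ α₂ A B C : ℝ} (hα₁ : 0 ≤ α₁) (hα : α₁ ≤ α₂)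
    (hA : 0 ≤ A) (hB : 0 ≤ B) (hC : 0 ≤ C) :
    ((A + B + C) ^ α₁ + (A + B + C) ^ α₂) * (B + C)
      ≤ 2 * 3 ^ α₂ * ((A ^ α₁ + A ^ α₂) * (B + C) + B ^ (1 + α₁) + C ^ (1 + α₁)
          + B ^ (1 + α₂) + C ^ (1 + α₂)) := by
  have h₁ := add_add_rpow_mul_le hα₁ hA hB hC
  have h₂ := add_add_rpow_mul_le (hα₁.trans hα) hA hB hC
  have h3 : (3 : ℝ) ^ α₁ ≤ 3 ^ α₂ := rpow_le_rpow_of_exponent_le (by norm_num) hα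
  have hX : 0 ≤ A ^ α₁ * (B + C) + B ^ (1 + α₁) + C ^ (1 + α₁) := by positivity
  nlinarith [mul_le_mul_of_nonneg_right h3 hX]

theorem stmt_8_general (α₁ α₂ C₀ : ℝ) (hα₁ : 1/2 < α₁) (hα : α₁ ≤ α₂) (hC₀ : 0 < C₀)
    (g : ℝ → ℝ) (hg : ContDiff ℝ 2 g)
    (hg0 : g 0 = 0) (hg'0 : deriv g 0 = 0)
    (hg'' : ∀ s : ℝ, |deriv (deriv g) s| ≤ C₀ * (|s| ^ α₁ + |s| ^ α₂))
    (G : ℂ → ℂ) (hG0 : G 0 = 0)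
    (hGdef : ∀ z : ℂ, z ≠ 0 → G z = (z / ((‖z‖ : ℝ) : ℂ)) * (g ‖z‖ : ℂ))
    (g₂ : ℂ → ℂ → ℂ)
    (hg₂ : ∀ a z : ℂ, g₂ a z = G (a + z) - G a - fderiv ℝ G a z) :
    ∃ C > 0, ∀ a z₁ z₂ : ℂ,
      ‖g₂ a z₁ - g₂ a z₂‖
        ≤ C * ((‖a‖ ^ α₁ + ‖a‖ ^ α₂) * (‖z₁‖ + ‖z₂‖)
            + ‖z₁‖ ^ (1 + α₁) + ‖z₂‖ ^ (1 + α₁)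
            + ‖z₁‖ ^ (1 + α₂) + ‖z₂‖ ^ (1 + α₂))
          * ‖z₁ - z₂‖ := by
  have hα₁0 : 0 ≤ α₁ := by linarith
  have hω : MonotoneOn (fun r : ℝ => C₀ * (r ^ α₁ + r ^ α₂)) (Ici 0) := fun r hr s _ hrs => by
    have := rpow_le_rpow hr hrs hα₁0
    have := rpow_le_rpow hr hrs (hα₁0.trans hα)
    dsimp only
    gcongr
  have hG : G = radialMap g := by
    funext z
    rcases eq_or_ne z 0 with rfl | hz
    · simp [hG0, radialMap]
    · rw [hGdef z hz, radialMap, Complex.real_smul]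
      push_cast
      ring
  subst hG
  refine ⟨72 * C₀ * 3 ^ α₂, by positivity, fun a z₁ z₂ => ?_⟩
  rw [hg₂, hg₂, (hasFDerivAt_radialMap hg hω hg'' hg0 hg'0 a).fderiv]
  refine (norm_radialMap_remainder_sub_le hg hω hg'' hg0 hg'0 a z₁ z₂).trans ?_
  have h := add_add_rpow_add_rpow_mul_le hα₁0 hα (norm_nonneg a) (norm_nonneg z₁) (norm_nonneg z₂)
  have hd : 0 ≤ 36 * C₀ * ‖z₁ - z₂‖ := by positivity
  nlinarith [mul_le_mul_of_nonneg_left h hd]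

/-- With `g₂(a,z) = G(a+z) − G(a) − DG(a)[z]`, there is `C > 0` such that for all
`a, z₁, z₂ ∈ ℂ`:
`|g₂(a,z₁) − g₂(a,z₂)| ≤ C·[(|a|^α₁+|a|^α₂)(|z₁|+|z₂|) + |z₁|^{1+α₁}+|z₂|^{1+α₁}+|z₁|^{1+α₂}+|z₂|^{1+α₂}]·|z₁−z₂|`. -/
theorem stmt_8 (α₁ α₂ C₀ : ℝ) (hα₁ : 1/2 < α₁) (hα : α₁ ≤ α₂) (hC₀ : 0 < C₀)
    (g : ℝ → ℝ) (hg : ContDiff ℝ 2 g) (hodd : ∀ s : ℝ, g (-s) = -g s)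
    (hg0 : g 0 = 0) (hg'0 : deriv g 0 = 0)
    (hg'' : ∀ s : ℝ, |deriv (deriv g) s| ≤ C₀ * (|s| ^ α₁ + |s| ^ α₂))
    (G : ℂ → ℂ) (hG0 : G 0 = 0)
    (hGdef : ∀ z : ℂ, z ≠ 0 → G z = (z / ((‖z‖ : ℝ) : ℂ)) * (g ‖z‖ : ℂ))
    (g₂ : ℂ → ℂ → ℂ)
    (hg₂ : ∀ a z : ℂ, g₂ a z = G (a + z) - G a - fderiv ℝ G a z) :
    ∃ C > 0, ∀ a z₁ z₂ : ℂ,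
      ‖g₂ a z₁ - g₂ a z₂‖
        ≤ C * ((‖a‖ ^ α₁ + ‖a‖ ^ α₂) * (‖z₁‖ + ‖z₂‖)
            + ‖z₁‖ ^ (1 + α₁) + ‖z₂‖ ^ (1 + α₁)
            + ‖z₁‖ ^ (1 + α₂) + ‖z₂‖ ^ (1 + α₂))
          * ‖z₁ - z₂‖ :=
  stmt_8_general α₁ α₂ C₀ hα₁ hα hC₀ g hg hg0 hg'0 hg'' G hG0 hGdef g₂ hg₂
end

section
/- Let a, c ≥ 0, 0 ≤ b < 1, 0 ≤ d < 1 and b + d > 1. Then there exists a constant C = C(a, b, c, d) > 0 such that for all t ≥ 0: ∫₀ᵗ (log(2 + (t − s)))^a · (t − s)^{−b} · (log(2 + s))^c · (1 + s)^{−d} ds ≤ C · (log(2 + t))^{a + c} · (1 + t)^{1 − b − d}. -/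
/-!
The logarithmic factors are monotone, so on `[0, t]` they are at most `log (2 + t) ^ (a + c)`,
and it remains to bound the power convolution `∫₀ᵗ (t - s) ^ (-b) * (1 + s) ^ (-d) ds`.
For `t ≤ 1` it is at most `∫₀ᵗ (t - s) ^ (-b) ds ≤ 1 / (1 - b)`, while
`(1 + t) ^ (1 - b - d)` stays above `2 ^ (-d)`. For `t ≥ 1` split at `t / 2`: on `[0, t / 2]`
the first factor is at most `(t / 2) ^ (-b) ≤ 4 ^ b (1 + t) ^ (-b)`, on `[t / 2, t]` the second
is at most `(1 + t / 2) ^ (-d) ≤ 2 ^ d (1 + t) ^ (-d)`, and the other factor integrates to at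
most `(1 + t) ^ (1 - d) / (1 - d)`, resp. `(1 + t) ^ (1 - b) / (1 - b)`.
-/

open MeasureTheory Real Set
open scoped Interval

namespace intervalIntegral

theorem integral_mono_on_of_nonneg {f g : ℝ → ℝ} {a b : ℝ} (hab : a ≤ b)
    (hf : ∀ x ∈ Icc a b, 0 ≤ f x) (h : ∀ x ∈ Icc a b, f x ≤ g x)
    (hg : IntervalIntegrable g volume a b) :
    ∫ x in a..b, f x ≤ ∫ x in a..b, g x := by
  simpa only [integral_of_le hab] using setIntegral_mono_of_nonneg
    (fun x hx ↦ hf x (Ioc_subset_Icc_self hx)) (fun x hx ↦ h x (Ioc_subset_Icc_self hx)) hg.1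

end intervalIntegral

theorem intervalIntegrable_sub_rpow_neg {b : ℝ} (hb : b < 1) (t u v : ℝ) :
    IntervalIntegrable (fun s ↦ (t - s) ^ (-b)) volume u v := by
  simpa using (intervalIntegral.intervalIntegrable_rpow' (r := -b) (by linarith)
    (a := t - u) (b := t - v)).comp_sub_left t

theorem integral_sub_rpow_neg {b : ℝ} (hb : b < 1) (u t : ℝ) :
    ∫ s in u..t, (t - s) ^ (-b) = (t - u) ^ (1 - b) / (1 - b) := by
  rw [intervalIntegral.integral_comp_sub_left (fun x ↦ x ^ (-b)) t, sub_self,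
    integral_rpow (Or.inl (by linarith)), zero_rpow (by linarith), neg_add_eq_sub]
  ring

theorem integral_one_add_rpow_neg_le {d : ℝ} (hd : d < 1) (x : ℝ) :
    ∫ s in (0 : ℝ)..x, (1 + s) ^ (-d) ≤ (1 + x) ^ (1 - d) / (1 - d) := by
  rw [intervalIntegral.integral_comp_add_left (fun x ↦ x ^ (-d)) 1, add_zero,
    integral_rpow (Or.inl (by linarith)), one_rpow, neg_add_eq_sub]
  gcongr
  linarith

theorem rpow_neg_le_mul_rpow_neg {x y k b : ℝ} (hx : 0 < x) (hy : 0 < y) (hb : 0 ≤ b)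
    (h : y ≤ k * x) : x ^ (-b) ≤ k ^ b * y ^ (-b) := by
  have hk : 0 < k := pos_of_mul_pos_left (hy.trans_le h) hx.le
  calc x ^ (-b) = k ^ b * (k * x) ^ (-b) := by
        rw [mul_rpow hk.le hx.le, rpow_neg hk.le, ← mul_assoc,
          mul_inv_cancel₀ (rpow_pos_of_pos hk b).ne', one_mul]
    _ ≤ k ^ b * y ^ (-b) :=
        mul_le_mul_of_nonneg_left (rpow_le_rpow_of_nonpos hy h (neg_nonpos.mpr hb))
          (rpow_nonneg hk.le b)

section PowerConvolution

variable {b d t : ℝ}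

theorem continuousOn_one_add_rpow {u v : ℝ} (hu : 0 ≤ u) (hv : 0 ≤ v) (r : ℝ) :
    ContinuousOn (fun s : ℝ ↦ (1 + s) ^ r) [[u, v]] :=
  ContinuousOn.rpow_const (by fun_prop) fun _ hs ↦
    Or.inl (ne_of_gt (by linarith [le_inf hu hv, hs.1]))

theorem powerKernel_nonneg {s : ℝ} (hs : 0 ≤ s) (hst : s ≤ t) :
    0 ≤ (t - s) ^ (-b) * (1 + s) ^ (-d) :=
  mul_nonneg (rpow_nonneg (sub_nonneg.mpr hst) _) (rpow_nonneg (by linarith) _)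

theorem intervalIntegrable_powerKernel (hb : b < 1) {u v : ℝ} (hu : 0 ≤ u) (hv : 0 ≤ v) :
    IntervalIntegrable (fun s ↦ (t - s) ^ (-b) * (1 + s) ^ (-d)) volume u v :=
  (intervalIntegrable_sub_rpow_neg hb t u v).mul_continuousOn (continuousOn_one_add_rpow hu hv _)

theorem integral_powerKernel_le_of_le_one (hb1 : b < 1) (hd0 : 0 ≤ d) (ht : 0 ≤ t)
    (ht1 : t ≤ 1) :
    ∫ s in (0 : ℝ)..t, (t - s) ^ (-b) * (1 + s) ^ (-d)
      ≤ 2 ^ d / (1 - b) * (1 + t) ^ (1 - b - d) := by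
  have hb : 0 < 1 - b := by linarith
  have hweight : 1 ≤ 2 ^ d * (1 + t) ^ (1 - b - d) := calc
    (1 : ℝ) = 2 ^ d * 2 ^ (-d) := by rw [← rpow_add two_pos, add_neg_cancel, rpow_zero]
    _ ≤ 2 ^ d * ((1 + t) ^ (1 - b) * (1 + t) ^ (-d)) := by
        gcongr
        calc (2 : ℝ) ^ (-d) = 1 * 2 ^ (-d) := (one_mul _).symm
          _ ≤ (1 + t) ^ (1 - b) * (1 + t) ^ (-d) :=
            mul_le_mul (one_le_rpow (by linarith) hb.le)
              (rpow_le_rpow_of_nonpos (by linarith) (by linarith) (neg_nonpos.mpr hd0))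
              (by positivity) (by positivity)
    _ = 2 ^ d * (1 + t) ^ (1 - b - d) := by
        rw [← rpow_add (by linarith), sub_eq_add_neg (1 - b)]
  calc ∫ s in (0 : ℝ)..t, (t - s) ^ (-b) * (1 + s) ^ (-d)
      ≤ ∫ s in (0 : ℝ)..t, (t - s) ^ (-b) :=
        intervalIntegral.integral_mono_on_of_nonneg ht
          (fun s hs ↦ powerKernel_nonneg hs.1 hs.2)
          (fun s hs ↦ mul_le_of_le_one_right (rpow_nonneg (by linarith [hs.2]) _)
            (rpow_le_one_of_one_le_of_nonpos (by linarith [hs.1]) (neg_nonpos.mpr hd0)))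
          (intervalIntegrable_sub_rpow_neg hb1 t 0 t)
    _ = t ^ (1 - b) / (1 - b) := by rw [integral_sub_rpow_neg hb1, sub_zero]
    _ ≤ 1 / (1 - b) := by gcongr; exact rpow_le_one ht ht1 hb.le
    _ ≤ 2 ^ d / (1 - b) * (1 + t) ^ (1 - b - d) := by
        rw [div_mul_eq_mul_div]; gcongr

theorem integral_powerKernel_firstHalf_le (hb0 : 0 ≤ b) (hd1 : d < 1) (ht1 : 1 ≤ t) :
    ∫ s in (0 : ℝ)..t / 2, (t - s) ^ (-b) * (1 + s) ^ (-d)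
      ≤ 4 ^ b / (1 - d) * (1 + t) ^ (1 - b - d) := by
  have ht2 : 0 ≤ t / 2 := by linarith
  calc ∫ s in (0 : ℝ)..t / 2, (t - s) ^ (-b) * (1 + s) ^ (-d)
      ≤ ∫ s in (0 : ℝ)..t / 2, (t / 2) ^ (-b) * (1 + s) ^ (-d) :=
        intervalIntegral.integral_mono_on_of_nonneg ht2
          (fun s hs ↦ powerKernel_nonneg hs.1 (by linarith [hs.2]))
          (fun s hs ↦ mul_le_mul_of_nonneg_right
            (rpow_le_rpow_of_nonpos (by linarith) (by linarith [hs.2]) (neg_nonpos.mpr hb0))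
            (rpow_nonneg (by linarith [hs.1]) _))
          ((continuousOn_one_add_rpow le_rfl ht2 _).intervalIntegrable.const_mul _)
    _ = (t / 2) ^ (-b) * ∫ s in (0 : ℝ)..t / 2, (1 + s) ^ (-d) :=
        intervalIntegral.integral_const_mul _ _
    _ ≤ (4 ^ b * (1 + t) ^ (-b)) * ((1 + t) ^ (1 - d) / (1 - d)) := by
        refine mul_le_mul
          (rpow_neg_le_mul_rpow_neg (k := 4) (by linarith) (by linarith) hb0 (by linarith))
          ((integral_one_add_rpow_neg_le hd1 _).trans ?_)
          (intervalIntegral.integral_nonneg ht2 fun s hs ↦ rpow_nonneg (by linarith [hs.1]) _)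
          (by positivity)
        gcongr
        linarith
    _ = 4 ^ b / (1 - d) * (1 + t) ^ (1 - b - d) := by
        rw [show 1 - b - d = -b + (1 - d) by ring, rpow_add (by linarith)]
        ring

theorem integral_powerKernel_secondHalf_le (hb1 : b < 1) (hd0 : 0 ≤ d) (ht : 0 ≤ t) :
    ∫ s in t / 2..t, (t - s) ^ (-b) * (1 + s) ^ (-d)
      ≤ 2 ^ d / (1 - b) * (1 + t) ^ (1 - b - d) := by
  have ht2 : t / 2 ≤ t := by linarith
  calc ∫ s in t / 2..t, (t - s) ^ (-b) * (1 + s) ^ (-d)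
      ≤ ∫ s in t / 2..t, (t - s) ^ (-b) * (1 + t / 2) ^ (-d) :=
        intervalIntegral.integral_mono_on_of_nonneg ht2
          (fun s hs ↦ powerKernel_nonneg (by linarith [hs.1]) hs.2)
          (fun s hs ↦ mul_le_mul_of_nonneg_left
            (rpow_le_rpow_of_nonpos (by linarith) (by linarith [hs.1]) (neg_nonpos.mpr hd0))
            (rpow_nonneg (by linarith [hs.2]) _))
          ((intervalIntegrable_sub_rpow_neg hb1 t _ _).mul_const _)
    _ = (t / 2) ^ (1 - b) / (1 - b) * (1 + t / 2) ^ (-d) := by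
        rw [intervalIntegral.integral_mul_const, integral_sub_rpow_neg hb1, sub_half]
    _ ≤ (1 + t) ^ (1 - b) / (1 - b) * (2 ^ d * (1 + t) ^ (-d)) := by
        refine mul_le_mul ?_
          (rpow_neg_le_mul_rpow_neg (k := 2) (by linarith) (by linarith) hd0 (by linarith))
          (by positivity) (div_nonneg (rpow_nonneg (by linarith) _) (by linarith))
        gcongr
        linarith
    _ = 2 ^ d / (1 - b) * (1 + t) ^ (1 - b - d) := by
        rw [sub_eq_add_neg (1 - b) d, rpow_add (by linarith)]
        ring

theorem integral_powerKernel_le_of_one_le (hb0 : 0 ≤ b) (hb1 : b < 1) (hd0 : 0 ≤ d)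
    (hd1 : d < 1) (ht1 : 1 ≤ t) :
    ∫ s in (0 : ℝ)..t, (t - s) ^ (-b) * (1 + s) ^ (-d)
      ≤ (4 ^ b / (1 - d) + 2 ^ d / (1 - b)) * (1 + t) ^ (1 - b - d) := by
  rw [← intervalIntegral.integral_add_adjacent_intervals
    (intervalIntegrable_powerKernel hb1 le_rfl (v := t / 2) (by linarith))
    (intervalIntegrable_powerKernel hb1 (by linarith) (by linarith)), add_mul]
  exact add_le_add (integral_powerKernel_firstHalf_le hb0 hd1 ht1)
    (integral_powerKernel_secondHalf_le hb1 hd0 (by linarith))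

theorem integral_powerKernel_le (hb0 : 0 ≤ b) (hb1 : b < 1) (hd0 : 0 ≤ d) (hd1 : d < 1)
    (ht : 0 ≤ t) :
    ∫ s in (0 : ℝ)..t, (t - s) ^ (-b) * (1 + s) ^ (-d)
      ≤ (4 ^ b / (1 - d) + 2 ^ d / (1 - b)) * (1 + t) ^ (1 - b - d) := by
  rcases le_total t 1 with ht1 | ht1
  · refine (integral_powerKernel_le_of_le_one hb1 hd0 ht ht1).trans ?_
    gcongr
    exact le_add_of_nonneg_left (div_nonneg (by positivity) (by linarith))
  · exact integral_powerKernel_le_of_one_le hb0 hb1 hd0 hd1 ht1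

end PowerConvolution

theorem log_two_add_rpow_le {a s t : ℝ} (ha : 0 ≤ a) (hs : 0 ≤ s) (hst : s ≤ t) :
    log (2 + s) ^ a ≤ log (2 + t) ^ a :=
  rpow_le_rpow (log_nonneg (by linarith)) (log_le_log (by linarith) (by linarith)) ha

theorem logWeightedKernel_le {a b c d s t : ℝ} (ha : 0 ≤ a) (hc : 0 ≤ c) (hs : 0 ≤ s)
    (hst : s ≤ t) :
    log (2 + (t - s)) ^ a * (t - s) ^ (-b) * log (2 + s) ^ c * (1 + s) ^ (-d)
      ≤ log (2 + t) ^ (a + c) * ((t - s) ^ (-b) * (1 + s) ^ (-d)) := by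
  have hlog : ∀ {x : ℝ} (e : ℝ), 0 ≤ x → 0 ≤ log (2 + x) ^ e :=
    fun e hx ↦ rpow_nonneg (log_nonneg (by linarith)) e
  calc log (2 + (t - s)) ^ a * (t - s) ^ (-b) * log (2 + s) ^ c * (1 + s) ^ (-d)
      = (log (2 + (t - s)) ^ a * log (2 + s) ^ c) * ((t - s) ^ (-b) * (1 + s) ^ (-d)) := by
        ring
    _ ≤ (log (2 + t) ^ a * log (2 + t) ^ c) * ((t - s) ^ (-b) * (1 + s) ^ (-d)) :=
        mul_le_mul_of_nonneg_right
          (mul_le_mul (log_two_add_rpow_le ha (by linarith) (by linarith))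
            (log_two_add_rpow_le hc hs hst) (hlog c hs) (hlog a (by linarith)))
          (powerKernel_nonneg hs hst)
    _ = log (2 + t) ^ (a + c) * ((t - s) ^ (-b) * (1 + s) ^ (-d)) := by
        rw [rpow_add (log_pos (by linarith))]

theorem logWeightedKernel_nonneg {a b c d s t : ℝ} (hs : 0 ≤ s) (hst : s ≤ t) :
    0 ≤ log (2 + (t - s)) ^ a * (t - s) ^ (-b) * log (2 + s) ^ c * (1 + s) ^ (-d) :=
  mul_nonneg (mul_nonneg (mul_nonneg (rpow_nonneg (log_nonneg (by linarith)) a)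
    (rpow_nonneg (sub_nonneg.mpr hst) _)) (rpow_nonneg (log_nonneg (by linarith)) c))
    (rpow_nonneg (by linarith) _)

theorem stmt_10_general (a b c d : ℝ) (ha : 0 ≤ a) (hc : 0 ≤ c) (hb0 : 0 ≤ b) (hb1 : b < 1)
    (hd0 : 0 ≤ d) (hd1 : d < 1) :
    ∃ C > 0, ∀ t : ℝ, 0 ≤ t →
      (∫ s in (0:ℝ)..t,
          Real.log (2 + (t - s)) ^ a * (t - s) ^ (-b)
            * Real.log (2 + s) ^ c * (1 + s) ^ (-d))
        ≤ C * Real.log (2 + t) ^ (a + c) * (1 + t) ^ (1 - b - d) := by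
  refine ⟨4 ^ b / (1 - d) + 2 ^ d / (1 - b), by
    have : 0 < 1 - b := by linarith
    have : 0 < 1 - d := by linarith
    positivity, fun t ht ↦ ?_⟩
  calc _ ≤ ∫ s in (0 : ℝ)..t, log (2 + t) ^ (a + c) * ((t - s) ^ (-b) * (1 + s) ^ (-d)) :=
        intervalIntegral.integral_mono_on_of_nonneg ht
          (fun s hs ↦ logWeightedKernel_nonneg hs.1 hs.2)
          (fun s hs ↦ logWeightedKernel_le ha hc hs.1 hs.2)
          ((intervalIntegrable_powerKernel hb1 le_rfl ht).const_mul _)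
    _ = log (2 + t) ^ (a + c) * ∫ s in (0 : ℝ)..t, (t - s) ^ (-b) * (1 + s) ^ (-d) :=
        intervalIntegral.integral_const_mul _ _
    _ ≤ log (2 + t) ^ (a + c) * ((4 ^ b / (1 - d) + 2 ^ d / (1 - b)) * (1 + t) ^ (1 - b - d)) :=
        mul_le_mul_of_nonneg_left (integral_powerKernel_le hb0 hb1 hd0 hd1 ht)
          (rpow_nonneg (log_nonneg (by linarith)) _)
    _ = _ := by ring

/-- Convolution estimate: for `a, c ≥ 0`, `0 ≤ b < 1`, `0 ≤ d < 1`, `b + d > 1`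
there is `C > 0` with
`∫₀ᵗ log^a(2+(t−s))·(t−s)^{−b}·log^c(2+s)·(1+s)^{−d} ds ≤ C·log^{a+c}(2+t)·(1+t)^{1−b−d}`
for all `t ≥ 0`. -/
theorem stmt_10 (a b c d : ℝ) (ha : 0 ≤ a) (hc : 0 ≤ c) (hb0 : 0 ≤ b) (hb1 : b < 1)
    (hd0 : 0 ≤ d) (hd1 : d < 1) (hbd : 1 < b + d) :
    ∃ C > 0, ∀ t : ℝ, 0 ≤ t →
      (∫ s in (0:ℝ)..t,
          Real.log (2 + (t - s)) ^ a * (t - s) ^ (-b)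
            * Real.log (2 + s) ^ c * (1 + s) ^ (-d))
        ≤ C * Real.log (2 + t) ^ (a + c) * (1 + t) ^ (1 - b - d) :=
  stmt_10_general a b c d ha hc hb0 hb1 hd0 hd1
end
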